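/- Let X, Y, Z be independent random variables on a probability space (Ω, ℙ), each uniformly distributed on the interval [0, 1/2]. Let R be a positive integer and h a real number with 1/2 < h < 1, set ℓ := R + h, and define T := ⌊1 + X + ℓ⌋ + 1 + Z − (2 + Y). Then ℙ(T ≤ R) = 1 − h. -/

import Mathlib

/-!
With `ℓ = R + h` we have `⌊1 + X + ℓ⌋ = R + 1 + ⌊X + h⌋`, so `T ≤ R` iff `⌊X + h⌋ + Z - Y ≤ 0`.
As `X + h ≥ 0` and `|Z - Y| < 1`, this happens (almost surely) iff `X < 1 - h` and `Z ≤ Y`.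
These two events are independent; the first has probability `(1 - h) / (1/2)`, and the second
has probability `1/2`, because `(Y, Z)` and `(Z, Y)` have the same law and `Y = Z` is a null event.
-/

open MeasureTheory ProbabilityTheory Set
open scoped ENNReal

noncomputable def measuredRoundTrip (x y z ℓ : ℝ) : ℝ := ⌊1 + x + ℓ⌋ + 1 + z - (2 + y)

lemma measuredRoundTrip_le_iff (R : ℤ) (h : ℝ) {x y z : ℝ} (hxh : 0 ≤ x + h) (hyz : y - z < 1) :
    measuredRoundTrip x y z (R + h) ≤ R ↔ x < 1 - h ∧ z ≤ y := by
  have hfloor : ⌊1 + x + ((R : ℝ) + h)⌋ = ⌊x + h⌋ + (R + 1) := by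
    rw [← Int.floor_add_intCast]; push_cast; ring_nf
  rw [measuredRoundTrip, hfloor]
  push_cast
  rcases (Int.floor_nonneg.mpr hxh).eq_or_lt with hzero | hpos
  · have hlt : x + h < 1 := (Int.floor_eq_zero_iff.mp hzero.symm).2
    rw [← hzero]
    constructor
    · intro hle; exact ⟨by linarith, by push_cast at hle; linarith⟩
    · rintro ⟨-, hzy⟩; push_cast; linarith
  · have hone : (1 : ℝ) ≤ ⌊x + h⌋ := by exact_mod_cast hpos
    have hge : 1 ≤ x + h := by simpa using Int.le_floor.mp hpos
    constructor
    · intro hle; linarith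
    · rintro ⟨hx, -⟩; linarith

section Symmetry

variable {α : Type*} [TopologicalSpace α] [LinearOrder α] [OrderClosedTopology α]
  [SecondCountableTopology α] [MeasurableSpace α] [OpensMeasurableSpace α]

lemma measure_prod_self_setOf_le_eq_inv_two (ν : Measure α) [IsProbabilityMeasure ν]
    [NullSingletonClass ν] : ν.prod ν {p : α × α | p.2 ≤ p.1} = 2⁻¹ := by
  set A := {p : α × α | p.2 ≤ p.1}
  set B := {p : α × α | p.1 ≤ p.2}
  have hA : MeasurableSet A := measurableSet_le measurable_snd measurable_fst
  have hB : MeasurableSet B := measurableSet_le'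
  have hswap : ν.prod ν B = ν.prod ν A := calc
    ν.prod ν B = (ν.prod ν).map Prod.swap B := by rw [Measure.prod_swap]
    _ = ν.prod ν A := Measure.map_apply measurable_swap hB
  have hdiag : ν.prod ν (A ∩ B) = 0 := by
    refine Measure.measure_prod_null_of_ae_null (hA.inter hB)
      (Filter.Eventually.of_forall fun x => ?_)
    have hslice : Prod.mk x ⁻¹' (A ∩ B) = {x} := by
      ext y
      simp only [A, B, mem_preimage, mem_inter_iff, mem_ofPred_eq, mem_singleton_iff]
      exact ⟨fun h => le_antisymm h.1 h.2, fun h => ⟨h.le, h.ge⟩⟩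
    simp [hslice]
  have hunion : A ∪ B = univ := eq_univ_of_forall fun p => le_total p.2 p.1
  have htwice : ν.prod ν A * 2 = 1 := by
    rw [mul_two]
    nth_rewrite 2 [← hswap]
    rw [← measure_union_add_inter A hB, hunion, hdiag, measure_univ, add_zero]
  exact ENNReal.eq_inv_of_mul_eq_one_left htwice

lemma ProbabilityTheory.IndepFun.measure_setOf_le_eq_inv_two {Ω : Type*} [MeasurableSpace Ω]
    {P : Measure Ω} [IsProbabilityMeasure P] {Y Z : Ω → α} (hind : IndepFun Y Z P)
    (hid : IdentDistrib Y Z P P) [NullSingletonClass (P.map Y)] :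
    P {ω | Z ω ≤ Y ω} = 2⁻¹ := by
  have hlaw : P.map (fun ω => (Y ω, Z ω)) = (P.map Y).prod (P.map Y) := by
    rw [(indepFun_iff_map_prod_eq_prod_map_map hid.aemeasurable_fst hid.aemeasurable_snd).mp hind,
      hid.map_eq]
  have := Measure.isProbabilityMeasure_map (μ := P) hid.aemeasurable_fst
  rw [← measure_prod_self_setOf_le_eq_inv_two (P.map Y), ← hlaw,
    Measure.map_apply_of_aemeasurable (hid.aemeasurable_fst.prodMk hid.aemeasurable_snd)
      (measurableSet_le measurable_snd measurable_fst)]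
  rfl

end Symmetry

namespace MeasureTheory.pdf.IsUniform

variable {Ω : Type*} [MeasurableSpace Ω] {P : Measure Ω}

lemma ae_mem {E : Type*} [MeasurableSpace E] {μ : Measure E} {X : Ω → E} {s : Set E}
    (hs : MeasurableSet s) (hns : μ s ≠ 0) (hnt : μ s ≠ ∞) (hu : IsUniform X s P μ) :
    ∀ᵐ ω ∂P, X ω ∈ s := by
  rw [ae_iff]
  exact (by simpa using hu.measure_preimage hns hnt hs.compl : P (X ⁻¹' s)ᶜ = 0)

lemma measure_preimage_Iio_of_Icc {X : Ω → ℝ} {a b t : ℝ} (hu : IsUniform X (Icc a b) P)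
    (hab : a < b) (htb : t ≤ b) :
    P (X ⁻¹' Iio t) = ENNReal.ofReal ((t - a) / (b - a)) := by
  have hcut : Icc a b ∩ Iio t = Ico a t := by
    ext x
    simp only [mem_inter_iff, mem_Icc, mem_Iio, mem_Ico]
    constructor
    · rintro ⟨⟨hax, -⟩, hxt⟩; exact ⟨hax, hxt⟩
    · rintro ⟨hax, hxt⟩; exact ⟨⟨hax, by linarith⟩, hxt⟩
  rw [hu.measure_preimage (by simp [hab]) (by simp) measurableSet_Iio, hcut,
    Real.volume_Ico, Real.volume_Icc, ENNReal.ofReal_div_of_pos (by linarith)]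

end MeasureTheory.pdf.IsUniform

theorem stmt_16_general {Ω : Type*} [MeasurableSpace Ω] (P : Measure Ω) [IsProbabilityMeasure P]
    (X Y Z : Ω → ℝ)
    (hIndep : iIndepFun ![X, Y, Z] P)
    (hX : pdf.IsUniform X (Set.Icc (0 : ℝ) (1 / 2)) P)
    (hY : pdf.IsUniform Y (Set.Icc (0 : ℝ) (1 / 2)) P)
    (hZ : pdf.IsUniform Z (Set.Icc (0 : ℝ) (1 / 2)) P)
    (R : ℕ) (h : ℝ) (hh0 : 1 / 2 < h) (hh1 : h < 1) :
    P {ω | (⌊1 + X ω + ((R : ℝ) + h)⌋ : ℝ) + 1 + Z ω - (2 + Y ω) ≤ (R : ℝ)}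
      = ENNReal.ofReal (1 - h) := by
  have hI0 : volume (Icc (0 : ℝ) (1 / 2)) ≠ 0 := by simp
  have hItop : volume (Icc (0 : ℝ) (1 / 2)) ≠ ∞ := by simp
  have hmeas : ∀ i, AEMeasurable (![X, Y, Z] i) P := by
    intro i
    fin_cases i
    exacts [hX.aemeasurable hI0 hItop, hY.aemeasurable hI0 hItop, hZ.aemeasurable hI0 hItop]
  have hevent : {ω | (⌊1 + X ω + ((R : ℝ) + h)⌋ : ℝ) + 1 + Z ω - (2 + Y ω) ≤ (R : ℝ)}
      =ᵐ[P] (X ⁻¹' Iio (1 - h) ∩ (fun ω => (Y ω, Z ω)) ⁻¹' {p : ℝ × ℝ | p.2 ≤ p.1} : Set Ω) := by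
    filter_upwards [hX.ae_mem measurableSet_Icc hI0 hItop, hY.ae_mem measurableSet_Icc hI0 hItop,
      hZ.ae_mem measurableSet_Icc hI0 hItop] with ω hXω hYω hZω
    have hiff := measuredRoundTrip_le_iff R h (x := X ω) (y := Y ω) (z := Z ω) (by linarith [hXω.1])
      (by linarith [hYω.2, hZω.1])
    rw [Int.cast_natCast] at hiff
    exact propext hiff
  have hindep : IndepFun X (fun ω => (Y ω, Z ω)) P :=
    (hIndep.indepFun_prodMk₀ hmeas 1 2 0 (by decide) (by decide)).symm
  have hYZ : IdentDistrib Y Z P P :=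
    ⟨hY.aemeasurable hI0 hItop, hZ.aemeasurable hI0 hItop, hY.trans hZ.symm⟩
  have : NullSingletonClass (P.map Y) := ⟨fun y => hY.absolutelyContinuous (measure_singleton y)⟩
  have hYZindep : IndepFun Y Z P := hIndep.indepFun (i := 1) (j := 2) (by decide)
  have hhalf : P ((fun ω => (Y ω, Z ω)) ⁻¹' {p : ℝ × ℝ | p.2 ≤ p.1}) = 2⁻¹ :=
    hYZindep.measure_setOf_le_eq_inv_two hYZ
  rw [measure_congr hevent, hindep.measure_inter_preimage_eq_mul _ _ measurableSet_Iio
      (measurableSet_le measurable_snd measurable_fst),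
    hX.measure_preimage_Iio_of_Icc (by norm_num) (by linarith), hhalf,
    ← ENNReal.ofReal_ofNat 2, ← ENNReal.ofReal_inv_of_pos two_pos,
    ← ENNReal.ofReal_mul (div_nonneg (by linarith) (by norm_num))]
  congr 1
  ring

/-- Case (ii) of the proof of Theorem 3: for `1/2 < h < 1` and `ℓ = R + h`,
the probability of the erroneous acceptance decision is `1 − h`. -/
theorem stmt_16 {Ω : Type*} [MeasurableSpace Ω] (P : Measure Ω) [IsProbabilityMeasure P]
    (X Y Z : Ω → ℝ)
    (hIndep : iIndepFun ![X, Y, Z] P)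
    (hX : pdf.IsUniform X (Set.Icc (0 : ℝ) (1 / 2)) P)
    (hY : pdf.IsUniform Y (Set.Icc (0 : ℝ) (1 / 2)) P)
    (hZ : pdf.IsUniform Z (Set.Icc (0 : ℝ) (1 / 2)) P)
    (R : ℕ) (hR : 0 < R) (h : ℝ) (hh0 : 1 / 2 < h) (hh1 : h < 1) :
    P {ω | (⌊1 + X ω + ((R : ℝ) + h)⌋ : ℝ) + 1 + Z ω - (2 + Y ω) ≤ (R : ℝ)}
      = ENNReal.ofReal (1 - h) :=
  stmt_16_general P X Y Z hIndep hX hY hZ R h hh0 hh1
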